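/- arXiv:2311.01970 — 3 statements merged into one kernel-verified Lean document; each statement's English description precedes it below -/
import Mathlib

section
/- Let F : ℝ → ℂ be continuous with compact support, and define f : ℝ → ℂ by the inversion formula f(x) = (1/√(2π)) ∫_ℝ F(k) e^{-ikx} dk. Then f is differentiable and for every x ∈ ℝ, for all sufficiently small Δ > 0 the series Σ_{s=1}^∞ (-1)^{s-1} (f(x+Δs) − f(x−Δs))/(Δs) converges (as a limit of partial sums), and its sum tends to f'(x) as Δ → 0⁺; that is, 𝔻(f)(x) = f'(x) for every function f whose Fourier transform has compact support. -/
/-!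
For `|θ| < π` the alternating series `∑_{s ≥ 1} (-1)^(s-1) sin (s θ) / s` is the Fourier series of
the sawtooth and sums to `θ / 2`. Hence `D_Δ` maps the plane wave `y ↦ e^{-iky}` to exactly
`-ik e^{-iky}` once `|kΔ| ≤ π/2`, and for `Δ` small compared with the support of `F` this gives
`D_Δ f = f'`. To exchange the series with the Fourier integral, the partial sums are written as
`θ / 2` plus an integral over `[0, θ]` of `e^{i(N+1)t} / (1 + e^{it})`: this remainder is bounded
by `|θ|` when `|θ| ≤ π/2` and tends to zero by the Riemann–Lebesgue lemma, so dominated convergence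
applies.
-/

open Filter Finset MeasureTheory Topology Complex Real

lemma one_add_cos_pos {t : ℝ} (ht : |t| < π) : 0 < 1 + Real.cos t := by
  have h := Real.cos_sq (t / 2)
  rw [mul_div_cancel₀ t two_ne_zero] at h
  have hpos : 0 < Real.cos (t / 2) :=
    Real.cos_pos_of_mem_Ioo ⟨by linarith [neg_abs_le t], by linarith [le_abs_self t]⟩
  nlinarith

lemma re_one_add_exp_mul_I (t : ℝ) : (1 + cexp (t * I)).re = 1 + Real.cos t := by
  simp [exp_ofReal_mul_I_re]

lemma one_add_exp_mul_I_ne_zero {t : ℝ} (ht : |t| < π) : 1 + cexp (t * I) ≠ 0 := fun h => by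
  have := re_one_add_exp_mul_I t
  rw [h, zero_re] at this
  linarith [one_add_cos_pos ht]

lemma re_div_one_add_of_norm_eq_one {z : ℂ} (hz : ‖z‖ = 1) (h : 1 + z ≠ 0) :
    (z / (1 + z)).re = 1 / 2 := by
  have hsq : z.re * z.re + z.im * z.im = 1 := by
    rw [← normSq_apply, normSq_eq_norm_sq, hz]; norm_num
  have hden : normSq (1 + z) ≠ 0 := normSq_eq_zero.not.mpr h
  rw [div_re, ← add_div, div_eq_iff hden]
  simp only [normSq_apply, add_re, add_im, one_re, one_im] at hden ⊢
  linear_combination hsq / 2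

lemma sum_range_neg_one_pow_mul_pow_succ {K : Type*} [Field K] {z : K} (h : 1 + z ≠ 0)
    (N : ℕ) :
    ∑ n ∈ range N, (-1) ^ n * z ^ (n + 1) = z / (1 + z) - (-1) ^ N * (z ^ (N + 1) / (1 + z)) := by
  induction N with
  | zero => simp
  | succ N ih =>
    rw [sum_range_succ, ih]
    field_simp
    ring

lemma exp_mul_I_pow (t : ℝ) (n : ℕ) : cexp (t * I) ^ n = cexp (n * t * I) := by
  rw [← Complex.exp_nat_mul, mul_assoc]

lemma neg_one_pow_eq_ofReal (n : ℕ) : (-1 : ℂ) ^ n = (((-1 : ℝ) ^ n : ℝ) : ℂ) := by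
  push_cast; rfl

lemma abs_le_abs_of_mem_uIcc_zero {t θ : ℝ} (ht : t ∈ Set.uIcc 0 θ) : |t| ≤ |θ| := by
  simpa using Set.abs_sub_left_of_mem_uIcc ht

lemma tendsto_intervalIntegral_exp_mul_I_mul (g : ℝ → ℂ) (a b : ℝ) :
    Tendsto (fun M : ℝ => ∫ t in a..b, cexp (M * t * I) * g t) (cocompact ℝ) (𝓝 0) := by
  have hscale : Tendsto (fun M : ℝ => -(2 * π)⁻¹ * M) (cocompact ℝ) (cocompact ℝ) :=
    tendsto_cocompact_mul_left₀ (by simp [Real.pi_ne_zero])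
  have h := ((Real.zero_at_infty_fourier ((Set.uIoc a b).indicator g)).comp hscale).const_smul
    (if a ≤ b then (1 : ℝ) else -1)
  rw [smul_zero] at h
  refine h.congr fun M => ?_
  rw [Function.comp_apply, Real.fourier_real_eq_integral_exp_smul,
    intervalIntegral.intervalIntegral_eq_integral_uIoc, ← integral_indicator measurableSet_uIoc]
  congr 2 with t
  by_cases ht : t ∈ Set.uIoc a b
  · simp only [Set.indicator_of_mem ht, smul_eq_mul]
    congr 2
    push_cast
    field_simp
  · simp [Set.indicator_of_notMem ht]

noncomputable def sawtoothPartialSum (N : ℕ) (θ : ℝ) : ℝ :=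
  ∑ n ∈ range N, (-1) ^ n * Real.sin ((n + 1) * θ) / (n + 1)

noncomputable def sawtoothKernel (N : ℕ) (t : ℝ) : ℂ :=
  cexp ((N + 1) * t * I) / (1 + cexp (t * I))

lemma sum_range_neg_one_pow_mul_cos {t : ℝ} (ht : |t| < π) (N : ℕ) :
    ∑ n ∈ range N, (-1) ^ n * Real.cos ((n + 1) * t) =
      1 / 2 - (-1) ^ N * (sawtoothKernel N t).re := by
  have h := congrArg re (sum_range_neg_one_pow_mul_pow_succ (one_add_exp_mul_I_ne_zero ht) N)
  rw [sub_re, re_div_one_add_of_norm_eq_one (norm_exp_ofReal_mul_I t)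
    (one_add_exp_mul_I_ne_zero ht), re_sum] at h
  convert h using 2 with n
  · rw [exp_mul_I_pow, neg_one_pow_eq_ofReal, re_ofReal_mul, ← exp_ofReal_mul_I_re]
    push_cast
    ring_nf
  · rw [exp_mul_I_pow, sawtoothKernel, neg_one_pow_eq_ofReal, re_ofReal_mul]
    push_cast
    ring_nf

lemma continuousOn_sawtoothKernel (N : ℕ) {θ : ℝ} (hθ : |θ| < π) :
    ContinuousOn (sawtoothKernel N) (Set.uIcc 0 θ) := by
  refine ContinuousOn.div (by fun_prop) (by fun_prop) fun t ht => one_add_exp_mul_I_ne_zero ?_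
  exact (abs_le_abs_of_mem_uIcc_zero ht).trans_lt hθ

lemma sawtoothPartialSum_eq {θ : ℝ} (hθ : |θ| < π) (N : ℕ) :
    sawtoothPartialSum N θ = θ / 2 - (-1) ^ N * (∫ t in 0..θ, sawtoothKernel N t).re := by
  have hterm (n : ℕ) : (-1) ^ n * Real.sin ((n + 1) * θ) / (n + 1)
      = ∫ t in 0..θ, (-1) ^ n * Real.cos ((n + 1) * t) := by
    rw [intervalIntegral.integral_const_mul,
      intervalIntegral.integral_comp_mul_left Real.cos (by positivity), integral_cos]
    simp only [mul_zero, Real.sin_zero, sub_zero, smul_eq_mul]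
    field_simp
  have hcont := continuousOn_sawtoothKernel N hθ
  calc sawtoothPartialSum N θ
      = ∫ t in 0..θ, ∑ n ∈ range N, (-1) ^ n * Real.cos ((n + 1) * t) := by
        rw [intervalIntegral.integral_finsetSum fun n _ =>
          Continuous.intervalIntegrable (by fun_prop) _ _]
        exact sum_congr rfl fun n _ => hterm n
    _ = ∫ t in 0..θ, (1 / 2 - (-1) ^ N * (sawtoothKernel N t).re) := by
        exact intervalIntegral.integral_congr fun t ht =>
          sum_range_neg_one_pow_mul_cos ((abs_le_abs_of_mem_uIcc_zero ht).trans_lt hθ) N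
    _ = _ := by
        have hre : IntervalIntegrable (fun t => (sawtoothKernel N t).re) volume 0 θ :=
          (continuous_re.comp_continuousOn hcont).intervalIntegrable
        rw [intervalIntegral.integral_sub intervalIntegrable_const (hre.const_mul _),
          intervalIntegral.integral_const_mul,
          ← reCLM_apply, ← reCLM.intervalIntegral_comp_comm hcont.intervalIntegrable]
        simp only [intervalIntegral.integral_const, sub_zero, smul_eq_mul, reCLM_apply]
        ring

lemma norm_sawtoothKernel_le (N : ℕ) {t : ℝ} (ht : |t| ≤ π / 2) : ‖sawtoothKernel N t‖ ≤ 1 := by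
  have hcos : 0 ≤ Real.cos t := Real.cos_nonneg_of_mem_Icc (abs_le.mp ht)
  have hden : 1 ≤ ‖1 + cexp (t * I)‖ :=
    calc (1 : ℝ) ≤ (1 + cexp (t * I)).re := by rw [re_one_add_exp_mul_I]; linarith
      _ ≤ _ := re_le_norm _
  have hnum := norm_exp_ofReal_mul_I (((N : ℝ) + 1) * t)
  push_cast at hnum
  rwa [sawtoothKernel, norm_div, hnum, div_le_one (by linarith)]

lemma abs_sawtoothPartialSum_le {θ : ℝ} (hθ : |θ| ≤ π / 2) (N : ℕ) :
    |sawtoothPartialSum N θ| ≤ π := by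
  have hK : ‖∫ t in 0..θ, sawtoothKernel N t‖ ≤ 1 * |θ - 0| :=
    intervalIntegral.norm_integral_le_of_norm_le_const fun t ht => norm_sawtoothKernel_le N
      ((abs_le_abs_of_mem_uIcc_zero (Set.uIoc_subset_uIcc ht)).trans hθ)
  rw [sawtoothPartialSum_eq (by linarith [pi_pos]) N]
  calc |θ / 2 - (-1) ^ N * (∫ t in 0..θ, sawtoothKernel N t).re|
      ≤ |θ| / 2 + ‖∫ t in 0..θ, sawtoothKernel N t‖ := by
        refine (abs_sub _ _).trans (add_le_add (by rw [abs_div, abs_two]) ?_)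
        simpa [abs_mul] using abs_re_le_norm _
    _ ≤ π := by rw [one_mul, sub_zero] at hK; linarith [pi_pos]

lemma tendsto_sawtoothPartialSum {θ : ℝ} (hθ : |θ| < π) :
    Tendsto (fun N => sawtoothPartialSum N θ) atTop (𝓝 (θ / 2)) := by
  have hN : Tendsto (fun N : ℕ => (N : ℝ) + 1) atTop (cocompact ℝ) :=
    (tendsto_atTop_add_const_right _ 1 tendsto_natCast_atTop_atTop).mono_right atTop_le_cocompact
  have hK : Tendsto (fun N => ∫ t in 0..θ, sawtoothKernel N t) atTop (𝓝 0) := by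
    refine ((tendsto_intervalIntegral_exp_mul_I_mul (fun t => (1 + cexp (t * I))⁻¹) 0 θ).comp
      hN).congr fun N => ?_
    simp [sawtoothKernel, div_eq_mul_inv]
  have hrem : Tendsto (fun N => (-1) ^ N * (∫ t in 0..θ, sawtoothKernel N t).re) atTop (𝓝 0) :=
    squeeze_zero_norm (fun N => by simpa [abs_mul] using abs_re_le_norm _) (by simpa using hK.norm)
  simpa [sawtoothPartialSum_eq hθ] using (tendsto_const_nhds (x := θ / 2)).sub hrem

lemma norm_exp_neg_I_mul_mul (k y : ℝ) : ‖cexp (-I * k * y)‖ = 1 := by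
  rw [show -I * k * y = ↑(-(k * y)) * I by push_cast; ring, norm_exp_ofReal_mul_I]

lemma MeasureTheory.Integrable.mul_exp_neg_I_mul {g : ℝ → ℂ} (hg : Integrable g) (y : ℝ) :
    Integrable fun k : ℝ => g k * cexp (-I * k * y) :=
  hg.mul_bdd (c := 1) (by fun_prop) (ae_of_all _ fun k => (norm_exp_neg_I_mul_mul k y).le)

lemma hasDerivAt_integral_mul_exp_neg_I_mul {g : ℝ → ℂ} (hg : Integrable g)
    (hg' : Integrable fun k : ℝ => (k : ℂ) * g k) (x : ℝ) :
    HasDerivAt (fun y : ℝ => ∫ k, g k * cexp (-I * k * y))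
      (∫ k, g k * (-I * k * cexp (-I * k * x))) x := by
  have hderiv (k y : ℝ) : HasDerivAt (fun y : ℝ => g k * cexp (-I * k * y))
      (g k * (-I * k * cexp (-I * k * y))) y := by
    have h := ((hasDerivAt_id (y : ℂ)).const_mul (-I * k)).cexp.comp_ofReal.const_mul (g k)
    simp only [mul_one, id] at h
    exact h.congr_deriv (by ring)
  have hbound (k y : ℝ) : ‖g k * (-I * k * cexp (-I * k * y))‖ = ‖(k : ℂ) * g k‖ := by
    rw [norm_mul, norm_mul, norm_mul, norm_mul, norm_exp_neg_I_mul_mul]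
    simp [mul_comm]
  refine (hasDerivAt_integral_of_dominated_loc_of_deriv_le
    (bound := fun k : ℝ => ‖(k : ℂ) * g k‖)
    (Metric.ball_mem_nhds x one_pos) (Eventually.of_forall fun y => ?_)
    (hg.mul_exp_neg_I_mul x) ?_ (ae_of_all _ fun (k : ℝ) y _ => (hbound k y).le) hg'.norm
    (ae_of_all _ fun (k : ℝ) y _ => hderiv k y)).2
  · exact (hg.mul_exp_neg_I_mul y).aestronglyMeasurable
  · exact hg.aestronglyMeasurable.mul (by fun_prop)

lemma exp_sub_exp_eq_mul_sin (k x r : ℝ) :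
    cexp (-I * k * ↑(x + r)) - cexp (-I * k * ↑(x - r)) =
      cexp (-I * k * x) * (-2 * I * ↑(Real.sin (k * r))) := by
  have hplus : cexp (-I * k * ↑(x + r)) = cexp (-I * k * x) * cexp (↑(-(k * r)) * I) := by
    rw [← Complex.exp_add]; push_cast; ring_nf
  have hminus : cexp (-I * k * ↑(x - r)) = cexp (-I * k * x) * cexp (↑(k * r) * I) := by
    rw [← Complex.exp_add]; push_cast; ring_nf
  rw [hplus, hminus, exp_mul_I, exp_mul_I]
  push_cast
  rw [Complex.cos_neg, Complex.sin_neg]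
  ring

/-- The `N`-th partial sum of the series `D_Δ(f)(x)`, with summation index `n = s - 1`. -/
noncomputable def diffSeriesPartialSum (f : ℝ → ℂ) (x Δ : ℝ) (N : ℕ) : ℂ :=
  ∑ n ∈ range N, (-1 : ℂ) ^ n * (f (x + Δ * ((n : ℝ) + 1)) - f (x - Δ * ((n : ℝ) + 1))) /
    ((Δ * ((n : ℝ) + 1) : ℝ) : ℂ)

lemma diffSeriesPartialSum_const_mul (c : ℂ) (u : ℝ → ℂ) (x Δ : ℝ) (N : ℕ) :
    diffSeriesPartialSum (fun y => c * u y) x Δ N = c * diffSeriesPartialSum u x Δ N := by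
  simp only [diffSeriesPartialSum, mul_sum]
  exact sum_congr rfl fun n _ => by ring

lemma diffSeriesPartialSum_integral {G : ℝ → ℝ → ℂ} (hG : ∀ y, Integrable fun k => G k y)
    (x Δ : ℝ) (N : ℕ) :
    diffSeriesPartialSum (fun y => ∫ k, G k y) x Δ N = ∫ k, diffSeriesPartialSum (G k) x Δ N := by
  simp only [diffSeriesPartialSum]
  rw [integral_finsetSum _ fun n _ => ?_]
  · refine sum_congr rfl fun n _ => ?_
    rw [integral_div, integral_const_mul, integral_sub (hG _) (hG _)]
  · exact (((hG _).sub (hG _)).const_mul _).div_const _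

lemma diffSeriesPartialSum_exp (k x Δ : ℝ) (N : ℕ) :
    diffSeriesPartialSum (fun y => cexp (-I * k * y)) x Δ N =
      cexp (-I * k * x) * (-2 * I / Δ) * sawtoothPartialSum N (k * Δ) := by
  simp only [diffSeriesPartialSum, sawtoothPartialSum, ofReal_sum, mul_sum]
  refine sum_congr rfl fun n _ => ?_
  rw [exp_sub_exp_eq_mul_sin]
  push_cast
  field_simp

lemma tendsto_diffSeriesPartialSum_integral_mul_exp {g : ℝ → ℂ} (hg : Integrable g) {Δ : ℝ}
    (hΔ : 0 < Δ) (hsupp : ∀ k, g k ≠ 0 → |k * Δ| ≤ π / 2) (x : ℝ) :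
    Tendsto (diffSeriesPartialSum (fun y : ℝ => ∫ k, g k * cexp (-I * k * y)) x Δ) atTop
      (𝓝 (∫ k, g k * (-I * k * cexp (-I * k * x)))) := by
  have hsum (N : ℕ) : diffSeriesPartialSum (fun y : ℝ => ∫ k, g k * cexp (-I * k * y)) x Δ N =
      ∫ k, g k * (cexp (-I * k * x) * (-2 * I / Δ) * sawtoothPartialSum N (k * Δ)) := by
    rw [diffSeriesPartialSum_integral hg.mul_exp_neg_I_mul]
    simp only [diffSeriesPartialSum_const_mul, diffSeriesPartialSum_exp]
  refine (tendsto_congr hsum).mpr <|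
    tendsto_integral_of_dominated_convergence (fun k => ‖g k‖ * (2 / Δ * π))
    (fun N => hg.aestronglyMeasurable.mul (Continuous.aestronglyMeasurable ?_))
    (hg.norm.mul_const _) (fun N => ae_of_all _ fun k => ?_) (ae_of_all _ fun k => ?_)
  · unfold sawtoothPartialSum
    fun_prop
  · rcases eq_or_ne (g k) 0 with hk | hk
    · simp [hk]
    rw [norm_mul]
    refine mul_le_mul_of_nonneg_left ?_ (norm_nonneg _)
    have hcoef : ‖-2 * I / (Δ : ℂ)‖ = 2 / Δ := by
      simp [abs_of_pos hΔ]
    rw [norm_mul, norm_mul, norm_exp_neg_I_mul_mul, hcoef, norm_real, Real.norm_eq_abs, one_mul]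
    exact mul_le_mul_of_nonneg_left (abs_sawtoothPartialSum_le (hsupp k hk) N) (by positivity)
  · rcases eq_or_ne (g k) 0 with hk | hk
    · simp [hk]
    have hlim := (continuous_ofReal.tendsto _).comp
      (tendsto_sawtoothPartialSum ((hsupp k hk).trans_lt (by linarith [pi_pos])))
    have hval : g k * (-I * k * cexp (-I * k * x)) =
        g k * (cexp (-I * k * x) * (-2 * I / Δ) * ↑(k * Δ / 2)) := by
      have hΔ' : (Δ : ℂ) ≠ 0 := ofReal_ne_zero.mpr hΔ.ne'
      push_cast
      field_simp
    rw [hval]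
    exact (hlim.const_mul _).const_mul (g k)

/-- If `F : ℝ → ℂ` is continuous with compact support and
`f(x) = (1/√(2π)) ∫ F(k) e^{-ikx} dk`, then `f` is differentiable, and for every `x`
the series `D_Δ(f)(x)` converges for all sufficiently small `Δ > 0`, with sum tending
to `f'(x)` as `Δ → 0⁺`. -/
theorem stmt_1 (F : ℝ → ℂ) (hFc : Continuous F) (hFsupp : HasCompactSupport F)
    (f : ℝ → ℂ)
    (hf : ∀ x : ℝ, f x =
      ((1 / Real.sqrt (2 * Real.pi) : ℝ) : ℂ) *
        ∫ k : ℝ, F k * Complex.exp (-Complex.I * (k : ℂ) * (x : ℂ))) :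
    Differentiable ℝ f ∧
    ∀ x : ℝ, ∃ D : ℝ → ℂ,
      (∀ᶠ Δ in nhdsWithin (0 : ℝ) (Set.Ioi 0),
        Tendsto (fun N : ℕ => ∑ n ∈ Finset.range N,
            (-1 : ℂ) ^ n * (f (x + Δ * ((n : ℝ) + 1)) - f (x - Δ * ((n : ℝ) + 1))) /
              ((Δ * ((n : ℝ) + 1) : ℝ) : ℂ))
          atTop (nhds (D Δ))) ∧
      Tendsto D (nhdsWithin (0 : ℝ) (Set.Ioi 0)) (nhds (deriv f x)) := by
  set c : ℂ := ((1 / Real.sqrt (2 * Real.pi) : ℝ) : ℂ)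
  have hFi : Integrable F := hFc.integrable_of_hasCompactSupport hFsupp
  have hkFi : Integrable fun k : ℝ => (k : ℂ) * F k :=
    (continuous_ofReal.mul hFc).integrable_of_hasCompactSupport hFsupp.mul_left
  obtain rfl : f = fun y : ℝ => c * ∫ k, F k * cexp (-I * k * y) := funext hf
  have hderiv (x : ℝ) :
      HasDerivAt (fun y : ℝ => c * ∫ k, F k * cexp (-I * k * y))
        (c * ∫ k, F k * (-I * k * cexp (-I * k * x))) x :=
    (hasDerivAt_integral_mul_exp_neg_I_mul hFi hkFi x).const_mul c
  refine ⟨fun x => (hderiv x).differentiableAt, fun x => ⟨fun _ => _, ?_, tendsto_const_nhds⟩⟩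
  obtain ⟨R, hR, hFR⟩ := hFsupp.isBounded.subset_closedBall_lt 0 0
  filter_upwards [Ioc_mem_nhdsGT (show 0 < π / 2 / R by positivity)] with Δ ⟨hΔ, hΔR⟩
  have hsupp (k : ℝ) (hk : F k ≠ 0) : |k * Δ| ≤ π / 2 := by
    have hkR : |k| ≤ R := by simpa using hFR (subset_tsupport F hk)
    rw [abs_mul, abs_of_pos hΔ]
    calc |k| * Δ ≤ R * Δ := by gcongr
      _ ≤ π / 2 := by rwa [le_div_iff₀ hR, mul_comm] at hΔR
  rw [(hderiv x).deriv]
  change Tendsto (diffSeriesPartialSum (fun y : ℝ => c * ∫ k, F k * cexp (-I * k * y)) x Δ) _ _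
  exact (tendsto_congr (diffSeriesPartialSum_const_mul c _ x Δ)).mpr
    ((tendsto_diffSeriesPartialSum_integral_mul_exp hFi hΔ hsupp x).const_mul c)
end

section
/- Let F : ℝ → ℂ be a measurable function satisfying |F(k)| ≤ α·k^{-γ} for all k > c₀, where α > 0, c₀ > 0 and γ > 2 are constants. Then for every x₀ ∈ ℝ and every Δ with 0 < Δ ≤ 1/(2c₀), the series S(x₀,Δ) converges absolutely and satisfies |S(x₀,Δ)| ≤ (α·Δ^{γ−2}/(γ−1)) · Σ_{s=1}^∞ s·((s−1/2)^{1−γ} − (s+1/2)^{1−γ}); consequently S(x₀,Δ) → 0 as Δ → 0⁺. -/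
/-!
On the `s`-th window `[(s - 1/2)/Δ, (s + 1/2)/Δ]` every `k` exceeds `c₀` once `2 c₀ Δ ≤ 1`, so the
`s`-th term is bounded by `(s/Δ) ∫ α k^{-γ} dk`. Computing the integral and scaling `k = u/Δ`
turns this into `α Δ^{γ-2}/(γ-1)` times the `s`-th term of a `Δ`-independent series, which
converges because, by the mean value bound, that term is `O(s^{1-γ})` and `γ - 1 > 1`.
-/

open Filter intervalIntegral

noncomputable section

-- The index `n` corresponds to the paper's `s = n + 1`.
def shellTerm (F : ℝ → ℂ) (x₀ Δ : ℝ) (n : ℕ) : ℂ :=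
  (((n : ℝ) + 1) / Δ : ℝ) •
    ∫ k in ((((n : ℝ) + 1) - 1/2) / Δ)..((((n : ℝ) + 1) + 1/2) / Δ),
      F k * Complex.exp (Complex.I * (k : ℂ) * (x₀ : ℂ))

def shellWeight (γ : ℝ) (n : ℕ) : ℝ :=
  ((n : ℝ) + 1) * ((((n : ℝ) + 1) - 1/2) ^ (1 - γ) - (((n : ℝ) + 1) + 1/2) ^ (1 - γ))

end

theorem integral_rpow_neg_of_pos {γ a b : ℝ} (hγ : γ ≠ 1) (ha : 0 < a) (hb : 0 < b) :
    ∫ t in a..b, t ^ (-γ) = (a ^ (1 - γ) - b ^ (1 - γ)) / (γ - 1) := by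
  have h0 : (0 : ℝ) ∉ Set.uIcc a b := fun h => by
    rcases Set.mem_uIcc.1 h with h | h <;> linarith [h.1]
  rw [integral_rpow (Or.inr ⟨fun h => hγ (by linarith [neg_inj.1 h]), h0⟩),
    show -γ + 1 = 1 - γ by ring]
  have : γ - 1 ≠ 0 := sub_ne_zero.2 hγ
  have : 1 - γ ≠ 0 := fun h => this (by linarith)
  field_simp
  ring

theorem norm_intervalIntegral_le_of_norm_le_rpow {E : Type*} [NormedAddCommGroup E]
    [NormedSpace ℝ E] {f : ℝ → E} {α γ a b : ℝ} (hγ : γ ≠ 1) (ha : 0 < a) (hab : a ≤ b)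
    (hf : ∀ t ∈ Set.Ioc a b, ‖f t‖ ≤ α * t ^ (-γ)) :
    ‖∫ t in a..b, f t‖ ≤ α / (γ - 1) * (a ^ (1 - γ) - b ^ (1 - γ)) := by
  have h0 : (0 : ℝ) ∉ Set.uIcc a b := fun h => by
    rw [Set.uIcc_of_le hab] at h; linarith [h.1]
  calc ‖∫ t in a..b, f t‖ ≤ ∫ t in a..b, α * t ^ (-γ) :=
        norm_integral_le_of_norm_le hab (Eventually.of_forall hf)
          ((intervalIntegrable_rpow (Or.inr h0)).const_mul α)
    _ = α / (γ - 1) * (a ^ (1 - γ) - b ^ (1 - γ)) := by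
        rw [intervalIntegral.integral_const_mul, integral_rpow_neg_of_pos hγ ha (ha.trans_le hab)]
        ring

theorem rpow_one_sub_sub_rpow_one_sub_le {γ a : ℝ} (hγ : 1 < γ) (ha : 0 < a) :
    a ^ (1 - γ) - (a + 1) ^ (1 - γ) ≤ (γ - 1) * a ^ (-γ) := by
  have hab : a ≤ a + 1 := by linarith
  have hmono : ∫ t in a..(a + 1), t ^ (-γ) ≤ ∫ _ in a..(a + 1), a ^ (-γ) :=
    integral_mono_on hab
      (intervalIntegrable_rpow (Or.inr fun h => by
        rw [Set.uIcc_of_le hab] at h; linarith [h.1]))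
      intervalIntegrable_const
      fun t ht => Real.rpow_le_rpow_of_nonpos ha ht.1 (by linarith)
  rw [integral_rpow_neg_of_pos hγ.ne' ha (by linarith), intervalIntegral.integral_const, smul_eq_mul,
    add_sub_cancel_left, one_mul, div_le_iff₀' (by linarith)] at hmono
  exact hmono

theorem shellWeight_le {γ : ℝ} (hγ : 1 < γ) (n : ℕ) :
    shellWeight γ n ≤ (γ - 1) * 2 ^ γ * ((n : ℝ) + 1) ^ (1 - γ) := by
  set s : ℝ := (n : ℝ) + 1
  have hs : 1 ≤ s := by simp [s]
  have hmvt := rpow_one_sub_sub_rpow_one_sub_le hγ (a := s - 1/2) (by linarith)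
  rw [show s - 1/2 + 1 = s + 1/2 by ring] at hmvt
  have hhalf : (s - 1/2) ^ (-γ) ≤ 2 ^ γ * s ^ (-γ) := by
    calc (s - 1/2) ^ (-γ) ≤ (s / 2) ^ (-γ) :=
          Real.rpow_le_rpow_of_nonpos (by positivity) (by linarith) (by linarith)
      _ = 2 ^ γ * s ^ (-γ) := by
          rw [Real.div_rpow (by linarith) zero_le_two, Real.rpow_neg zero_le_two, div_inv_eq_mul,
            mul_comm]
  calc shellWeight γ n = s * ((s - 1/2) ^ (1 - γ) - (s + 1/2) ^ (1 - γ)) := rfl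
    _ ≤ s * ((γ - 1) * (2 ^ γ * s ^ (-γ))) := by gcongr; exact hmvt.trans (by gcongr)
    _ = (γ - 1) * 2 ^ γ * s ^ (1 - γ) := by
        rw [sub_eq_add_neg 1 γ, Real.rpow_add (by linarith), Real.rpow_one]; ring

theorem shellWeight_nonneg {γ : ℝ} (hγ : 1 ≤ γ) (n : ℕ) : 0 ≤ shellWeight γ n :=
  mul_nonneg (by positivity) <| sub_nonneg.2 <|
    Real.rpow_le_rpow_of_nonpos (by linarith [n.cast_nonneg (α := ℝ)]) (by linarith)
      (by linarith)

theorem summable_shellWeight {γ : ℝ} (hγ : 2 < γ) : Summable (shellWeight γ) := by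
  have hpow : Summable fun n : ℕ => ((n : ℝ) + 1) ^ (1 - γ) := by
    simpa using (summable_nat_add_iff 1).2 (Real.summable_nat_rpow.2 (by linarith : 1 - γ < -1))
  exact .of_nonneg_of_le (shellWeight_nonneg (by linarith)) (shellWeight_le (by linarith))
    (hpow.mul_left _)

theorem norm_shellTerm_le {F : ℝ → ℂ} {α c₀ γ Δ : ℝ} (hγ : γ ≠ 1)
    (hdecay : ∀ k : ℝ, c₀ < k → ‖F k‖ ≤ α * k ^ (-γ)) (x₀ : ℝ) (hΔ : 0 < Δ)
    (hc₀Δ : 2 * c₀ * Δ ≤ 1) (n : ℕ) :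
    ‖shellTerm F x₀ Δ n‖ ≤ α * Δ ^ (γ - 2) / (γ - 1) * shellWeight γ n := by
  set s : ℝ := (n : ℝ) + 1
  have hs : 1 ≤ s := by simp [s]
  have hc₀ : c₀ ≤ (s - 1/2) / Δ := by rw [le_div_iff₀ hΔ]; linarith
  have hint := norm_intervalIntegral_le_of_norm_le_rpow hγ
    (f := fun k => F k * Complex.exp (Complex.I * (k : ℂ) * (x₀ : ℂ)))
    (a := (s - 1/2) / Δ) (b := (s + 1/2) / Δ)
    (div_pos (by linarith) hΔ) (div_le_div_of_nonneg_right (by linarith) hΔ.le)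
    fun k hk => by
      rw [norm_mul, show Complex.I * k * x₀ = ((k * x₀ : ℝ) : ℂ) * Complex.I by push_cast; ring,
        Complex.norm_exp_ofReal_mul_I, mul_one]
      exact hdecay k (hc₀.trans_lt hk.1)
  have hscale : ∀ u : ℝ, 0 < u → (u / Δ) ^ (1 - γ) = u ^ (1 - γ) * Δ ^ (γ - 2) * Δ := by
    intro u hu
    rw [Real.div_rpow hu.le hΔ.le, mul_assoc, ← Real.rpow_add_one hΔ.ne', div_eq_mul_inv,
      ← Real.rpow_neg hΔ.le]
    congr 2; ring
  rw [hscale _ (by linarith), hscale _ (by linarith)] at hint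
  calc ‖shellTerm F x₀ Δ n‖ = s / Δ * ‖∫ k in (s - 1/2) / Δ..(s + 1/2) / Δ,
        F k * Complex.exp (Complex.I * (k : ℂ) * (x₀ : ℂ))‖ := by
        rw [shellTerm, norm_smul, Real.norm_of_nonneg (by positivity)]
    _ ≤ s / Δ * (α / (γ - 1) * ((s - 1/2) ^ (1 - γ) * Δ ^ (γ - 2) * Δ -
          (s + 1/2) ^ (1 - γ) * Δ ^ (γ - 2) * Δ)) := by gcongr
    _ = α * Δ ^ (γ - 2) / (γ - 1) * (s * ((s - 1/2) ^ (1 - γ) - (s + 1/2) ^ (1 - γ))) := by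
        field_simp

theorem stmt_3_general (F : ℝ → ℂ)
    (α c₀ γ : ℝ) (hc₀ : 0 < c₀) (hγ : 2 < γ)
    (hdecay : ∀ k : ℝ, c₀ < k → ‖F k‖ ≤ α * k ^ (-γ)) (x₀ : ℝ) :
    (∀ Δ : ℝ, 0 < Δ → Δ ≤ 1 / (2 * c₀) →
      Summable (fun n : ℕ =>
        ‖((((n : ℝ) + 1) / Δ : ℝ) •
          ∫ k in ((((n : ℝ) + 1) - 1/2) / Δ)..((((n : ℝ) + 1) + 1/2) / Δ),
            F k * Complex.exp (Complex.I * (k : ℂ) * (x₀ : ℂ)))‖) ∧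
      ‖(∑' n : ℕ,
          ((((n : ℝ) + 1) / Δ : ℝ) •
            ∫ k in ((((n : ℝ) + 1) - 1/2) / Δ)..((((n : ℝ) + 1) + 1/2) / Δ),
              F k * Complex.exp (Complex.I * (k : ℂ) * (x₀ : ℂ))))‖ ≤
        (α * Δ ^ (γ - 2) / (γ - 1)) *
          ∑' n : ℕ, ((n : ℝ) + 1) *
            ((((n : ℝ) + 1) - 1/2) ^ (1 - γ) - (((n : ℝ) + 1) + 1/2) ^ (1 - γ))) ∧
    Tendsto (fun Δ : ℝ => ∑' n : ℕ,
        ((((n : ℝ) + 1) / Δ : ℝ) •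
          ∫ k in ((((n : ℝ) + 1) - 1/2) / Δ)..((((n : ℝ) + 1) + 1/2) / Δ),
            F k * Complex.exp (Complex.I * (k : ℂ) * (x₀ : ℂ))))
      (nhdsWithin (0 : ℝ) (Set.Ioi 0)) (nhds 0) := by
  have hW := summable_shellWeight hγ
  have hbound (Δ : ℝ) (hΔ : 0 < Δ) (hΔc₀ : Δ ≤ 1 / (2 * c₀)) (n : ℕ) :
      ‖shellTerm F x₀ Δ n‖ ≤ α * Δ ^ (γ - 2) / (γ - 1) * shellWeight γ n :=
    norm_shellTerm_le (by linarith) hdecay x₀ hΔ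
      (by rw [le_div_iff₀ (by positivity)] at hΔc₀; linarith) n
  have hseries (Δ : ℝ) (hΔ : 0 < Δ) (hΔc₀ : Δ ≤ 1 / (2 * c₀)) :
      Summable (fun n => ‖shellTerm F x₀ Δ n‖) ∧
        ‖∑' n, shellTerm F x₀ Δ n‖ ≤ α * Δ ^ (γ - 2) / (γ - 1) * ∑' n, shellWeight γ n :=
    ⟨.of_nonneg_of_le (fun _ => norm_nonneg _) (hbound Δ hΔ hΔc₀) (hW.mul_left _),
      tsum_of_norm_bounded (hW.hasSum.mul_left _) (hbound Δ hΔ hΔc₀)⟩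
  refine ⟨hseries, squeeze_zero_norm' ?_ (a := fun Δ => α * Δ ^ (γ - 2) / (γ - 1) *
    ∑' n, shellWeight γ n) ?_⟩
  · filter_upwards [Ioo_mem_nhdsGT (by positivity : (0 : ℝ) < 1 / (2 * c₀))] with Δ hΔ
    exact (hseries Δ hΔ.1 hΔ.2.le).2
  · have hpow : Tendsto (fun Δ : ℝ => Δ ^ (γ - 2)) (nhdsWithin 0 (Set.Ioi 0)) (nhds 0) := by
      simpa [Real.zero_rpow (by linarith : γ - 2 ≠ 0)] using
        ((Real.continuous_rpow_const (by linarith : 0 ≤ γ - 2)).tendsto 0).mono_left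
          nhdsWithin_le_nhds
    simpa using ((hpow.const_mul α).div_const (γ - 1)).mul_const (∑' n, shellWeight γ n)

/-- If a measurable `F : ℝ → ℂ` satisfies `|F(k)| ≤ α k^{-γ}` for `k > c₀`
with `α, c₀ > 0` and `γ > 2`, then for every `x₀` and every `0 < Δ ≤ 1/(2c₀)` the series
`S(x₀,Δ)` converges absolutely, satisfies the stated bound, and `S(x₀,Δ) → 0` as
`Δ → 0⁺`. -/
theorem stmt_3 (F : ℝ → ℂ) (hF : Measurable F)
    (α c₀ γ : ℝ) (hα : 0 < α) (hc₀ : 0 < c₀) (hγ : 2 < γ)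
    (hdecay : ∀ k : ℝ, c₀ < k → ‖F k‖ ≤ α * k ^ (-γ)) (x₀ : ℝ) :
    (∀ Δ : ℝ, 0 < Δ → Δ ≤ 1 / (2 * c₀) →
      Summable (fun n : ℕ =>
        ‖((((n : ℝ) + 1) / Δ : ℝ) •
          ∫ k in ((((n : ℝ) + 1) - 1/2) / Δ)..((((n : ℝ) + 1) + 1/2) / Δ),
            F k * Complex.exp (Complex.I * (k : ℂ) * (x₀ : ℂ)))‖) ∧
      ‖(∑' n : ℕ,
          ((((n : ℝ) + 1) / Δ : ℝ) •
            ∫ k in ((((n : ℝ) + 1) - 1/2) / Δ)..((((n : ℝ) + 1) + 1/2) / Δ),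
              F k * Complex.exp (Complex.I * (k : ℂ) * (x₀ : ℂ))))‖ ≤
        (α * Δ ^ (γ - 2) / (γ - 1)) *
          ∑' n : ℕ, ((n : ℝ) + 1) *
            ((((n : ℝ) + 1) - 1/2) ^ (1 - γ) - (((n : ℝ) + 1) + 1/2) ^ (1 - γ))) ∧
    Tendsto (fun Δ : ℝ => ∑' n : ℕ,
        ((((n : ℝ) + 1) / Δ : ℝ) •
          ∫ k in ((((n : ℝ) + 1) - 1/2) / Δ)..((((n : ℝ) + 1) + 1/2) / Δ),
            F k * Complex.exp (Complex.I * (k : ℂ) * (x₀ : ℂ))))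
      (nhdsWithin (0 : ℝ) (Set.Ioi 0)) (nhds 0) :=
  stmt_3_general F α c₀ γ hc₀ hγ hdecay x₀
end

section
/- Let c > 0, ω(k) = c‖k‖, let A : ℝ² → ℂ be continuously differentiable with compact support, and set B(k) = conj(A(−k)) (also C¹ with compact support). Define the total angular momentum 𝒥 = −i(2π)² ∫_{ℝ²} ω(k) ( conj(A(k)) (k₁ ∂_{k₂}A(k) − k₂ ∂_{k₁}A(k)) − conj(B(k)) (k₁ ∂_{k₂}B(k) − k₂ ∂_{k₁}B(k)) ) dk. Then 𝒥 is real, i.e. conj(𝒥) = 𝒥. -/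
open MeasureTheory

set_option maxRecDepth 8000 in
/-- For `A : ℝ² → ℂ` of class C¹ with compact support and
`B(k) = conj(A(−k))`, the total angular momentum
`𝒥 = −i(2π)² ∫ ω(k) ( conj(A)(k×∇A) − conj(B)(k×∇B) ) dk` is real. -/
theorem stmt_13 (c : ℝ) (hc : 0 < c)
    (A B : ℝ × ℝ → ℂ)
    (hA : ContDiff ℝ 1 A) (hAsupp : HasCompactSupport A)
    (hB : ∀ k, B k = (starRingEnd ℂ) (A (-k)))
    (J : ℂ)
    (hJ : J = -Complex.I * (2 * Real.pi) ^ 2 *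
      ∫ k : ℝ × ℝ,
        ((c * Real.sqrt (k.1 ^ 2 + k.2 ^ 2) : ℝ) : ℂ) *
          ((starRingEnd ℂ) (A k) *
              ((k.1 : ℂ) * deriv (fun s => A (k.1, s)) k.2 -
               (k.2 : ℂ) * deriv (fun s => A (s, k.2)) k.1) -
           (starRingEnd ℂ) (B k) *
              ((k.1 : ℂ) * deriv (fun s => B (k.1, s)) k.2 -
               (k.2 : ℂ) * deriv (fun s => B (s, k.2)) k.1))) :
    (starRingEnd ℂ) J = J := by
  -- partial derivatives of B in terms of those of A
  have hBd2 : ∀ a b : ℝ, deriv (fun s => B (a, s)) b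
      = -(starRingEnd ℂ) (deriv (fun s => A (-a, s)) (-b)) := by
    intro a b
    have heq : (fun s => B (a, s)) = fun s => star (A (-a, -s)) := by
      funext s; rw [hB, starRingEnd_apply, Prod.neg_mk]
    rw [heq, deriv.star, deriv_comp_neg (f := fun t => A (-a, t)), star_neg, starRingEnd_apply]
  have hBd1 : ∀ a b : ℝ, deriv (fun s => B (s, b)) a
      = -(starRingEnd ℂ) (deriv (fun s => A (s, -b)) (-a)) := by
    intro a b
    have heq : (fun s => B (s, b)) = fun s => star (A (-s, -b)) := by
      funext s; rw [hB, starRingEnd_apply, Prod.neg_mk]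
    rw [heq, deriv.star, deriv_comp_neg (f := fun t => A (t, -b)), star_neg, starRingEnd_apply]
  have hstarB : ∀ k : ℝ × ℝ, (starRingEnd ℂ) (B k) = A (-k) := by
    intro k; rw [hB, Complex.conj_conj]
  -- the integrand
  set F : ℝ × ℝ → ℂ := fun k =>
    ((c * Real.sqrt (k.1 ^ 2 + k.2 ^ 2) : ℝ) : ℂ) *
      ((starRingEnd ℂ) (A k) *
          ((k.1 : ℂ) * deriv (fun s => A (k.1, s)) k.2 -
           (k.2 : ℂ) * deriv (fun s => A (s, k.2)) k.1) -
       (starRingEnd ℂ) (B k) *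
          ((k.1 : ℂ) * deriv (fun s => B (k.1, s)) k.2 -
           (k.2 : ℂ) * deriv (fun s => B (s, k.2)) k.1)) with hFdef
  -- key pointwise identity: the integrand is odd-conjugate
  have hpt : ∀ k : ℝ × ℝ, (starRingEnd ℂ) (F k) = -F (-k) := by
    rintro ⟨a, b⟩
    simp only [hFdef, Prod.neg_mk, Prod.fst, Prod.snd, hBd1, hBd2, hstarB, neg_neg]
    simp only [map_mul, map_sub, map_neg, Complex.conj_ofReal, Complex.conj_conj, neg_sq,
      Prod.neg_mk, neg_neg]
    push_cast
    ring
  -- hence the integral is purely imaginary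
  have hint : (starRingEnd ℂ) (∫ k : ℝ × ℝ, F k) = -∫ k : ℝ × ℝ, F k := by
    rw [← integral_conj]
    calc ∫ k : ℝ × ℝ, (starRingEnd ℂ) (F k) = ∫ k : ℝ × ℝ, -F (-k) := by
          simp only [hpt]
      _ = -∫ k : ℝ × ℝ, F (-k) := by rw [integral_neg]
      _ = -∫ k : ℝ × ℝ, F k := by rw [integral_neg_eq_self F volume]
  rw [hJ]
  simp only [map_mul, map_neg, map_pow, map_ofNat, Complex.conj_I, Complex.conj_ofReal, hint]
  ring
end
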